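/- Let G be a finite nonabelian simple group, and let φ_1, ..., φ_ℓ be all the epimorphisms F_2 → G. The image H of the diagonal map (φ_1,...,φ_ℓ) : F_2 → G^ℓ consists exactly of those tuples (u_1,...,u_ℓ) such that for all i, j and α ∈ Aut(G) with α ∘ φ_i = φ_j, one has α(u_i) = u_j. -/

import Mathlib

/-!
Hall's argument. Identify epimorphisms `F₂ → G` lying in one `Aut(G)`-orbit and pick one
representative `φ_q` per orbit. Then the diagonal `F₂ → ∏_q G` is onto, by induction on the
number of factors: if adding a factor `φ` does not enlarge the image, `φ` factors through an
epimorphism `∏ G → G`; since `G` is simple and nonabelian, such a map is an automorphism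
composed with a coordinate projection, so `φ` is in the orbit of an earlier representative.
A compatible tuple is then determined by its entries at the representatives.
-/

open Function

theorem Pi.mul_mulSingle_mul_inv {ι : Type*} [DecidableEq ι] {G : ι → Type*} [∀ i, Group (G i)]
    (y : ∀ i, G i) (i : ι) (a : G i) :
    y * Pi.mulSingle i a * y⁻¹ = Pi.mulSingle i (y i * a * (y i)⁻¹) := by
  ext j
  rcases eq_or_ne j i with rfl | h <;> simp [*]

theorem MonoidHom.normal_range_mulSingle {ι : Type*} [DecidableEq ι] (G : ι → Type*)
    [∀ i, Group (G i)] (i : ι) : (MonoidHom.mulSingle G i).range.Normal :=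
  ⟨by rintro _ ⟨a, rfl⟩ y; exact ⟨y i * a * (y i)⁻¹, (Pi.mul_mulSingle_mul_inv y i a).symm⟩⟩

theorem MonoidHom.surjective_prod_or_exists_comp_eq {F K G : Type*} [Group F] [Group K]
    [Group G] [IsSimpleGroup G] {d : F →* K} (hd : Surjective d) {f : F →* G}
    (hf : Surjective f) : Surjective (d.prod f) ∨ ∃ ψ : K →* G, ψ.comp d = f := by
  rcases (d.normal_ker.map f hf).eq_bot_or_eq_top with hbot | htop
  · have hker : d.ker ≤ f.ker := fun w hw => by
      simpa [hbot] using Subgroup.mem_map_of_mem f hw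
    exact .inr ⟨d.liftOfSurjective hd ⟨f, hker⟩, d.liftOfRightInverse_comp _ _ ⟨f, hker⟩⟩
  · refine .inl fun ⟨k, g⟩ => ?_
    obtain ⟨w, rfl⟩ := hd k
    obtain ⟨v, hv, hfv⟩ : (f w)⁻¹ * g ∈ d.ker.map f := htop ▸ Subgroup.mem_top _
    exact ⟨w * v, by simp_all [MonoidHom.mem_ker]⟩

namespace IsSimpleGroup

variable {G : Type*} [Group G] [IsSimpleGroup G]

theorem injective_of_surjective {H : Type*} [Group H] [Nontrivial H] {f : G →* H}
    (hf : Surjective f) : Injective f := by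
  rcases f.normal_ker.eq_bot_or_eq_top with hbot | htop
  · exact f.ker_eq_bot_iff.mp hbot
  · obtain ⟨h, hh⟩ := exists_ne (1 : H)
    obtain ⟨g, rfl⟩ := hf h
    exact absurd (by simp [MonoidHom.ker_eq_top_iff.mp htop]) hh

theorem center_eq_bot (hna : ∃ a b : G, a * b ≠ b * a) : Subgroup.center G = ⊥ := by
  refine (inferInstance : (Subgroup.center G).Normal).eq_bot_or_eq_top.resolve_right
    fun htop => ?_
  obtain ⟨a, b, hab⟩ := hna
  exact hab (Subgroup.mem_center_iff.mp (htop ▸ Subgroup.mem_top b) a)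

theorem exists_mulAut_comp_eval_eq (hna : ∃ a b : G, a * b ≠ b * a) {ι : Type*} [Finite ι]
    (ψ : (ι → G) →* G) (hψ : Surjective ψ) :
    ∃ i, ∃ α : MulAut G, α.toMonoidHom.comp (Pi.evalMonoidHom (fun _ => G) i) = ψ := by
  classical
  set Ψ : ι → G →* G := fun i => ψ.comp (MonoidHom.mulSingle (fun _ => G) i)
  obtain ⟨i, hi⟩ : ∃ i, Ψ i ≠ 1 := by
    by_contra! h
    obtain ⟨g, hg⟩ := exists_ne (1 : G)
    obtain ⟨x, rfl⟩ := hψ g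
    have hψ1 : ψ = 1 := MonoidHom.pi_ext fun i a => by simpa [Ψ] using DFunLike.congr_fun (h i) a
    exact hg (by simp [hψ1])
  have hsurj : Surjective (Ψ i) := by
    have hnormal : (Ψ i).range.Normal := by
      rw [MonoidHom.range_comp]
      exact (MonoidHom.normal_range_mulSingle _ i).map ψ hψ
    exact MonoidHom.range_eq_top.mp
      (hnormal.eq_bot_or_eq_top.resolve_left (mt MonoidHom.range_eq_bot_iff.mp hi))
  -- The image of any other factor commutes with the image of the `i`-th one, which is `G`.
  have hother : ∀ j ≠ i, ∀ x, Ψ j x = 1 := by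
    intro j hj x
    rw [← Subgroup.mem_bot, ← center_eq_bot hna, Subgroup.mem_center_iff]
    intro g
    obtain ⟨y, rfl⟩ := hsurj g
    simp only [Ψ, MonoidHom.comp_apply, MonoidHom.mulSingle_apply, ← map_mul]
    rw [(Pi.mulSingle_commute (f := fun _ : ι => G) hj.symm y x).eq]
  refine ⟨i, MulEquiv.ofBijective (Ψ i) ⟨injective_of_surjective hsurj, hsurj⟩, ?_⟩
  refine MonoidHom.pi_ext fun j x => ?_
  rcases eq_or_ne j i with rfl | hj
  · change Ψ j ((Pi.mulSingle j x : ι → G) j) = Ψ j x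
    rw [Pi.mulSingle_eq_same]
  · change Ψ i ((Pi.mulSingle j x : ι → G) i) = Ψ j x
    rw [Pi.mulSingle_eq_of_ne hj.symm, map_one, hother j hj x]

end IsSimpleGroup

instance MonoidHom.mulAutMulAction {M G : Type*} [MulOneClass M] [MulOneClass G] :
    MulAction (MulAut G) (M →* G) where
  smul α f := α.toMonoidHom.comp f
  one_smul _ := rfl
  mul_smul _ _ _ := rfl

section Hall

variable {F G : Type*} [Group F] [Group G] [IsSimpleGroup G]

theorem surjective_pi_of_pairwise_ne_mulAut_comp (hna : ∃ a b : G, a * b ≠ b * a)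
    {ι : Type*} [Finite ι] (φ : ι → F →* G) (hφ : ∀ i, Surjective (φ i))
    (hpair : Pairwise fun i j => ∀ α : MulAut G, α.toMonoidHom.comp (φ i) ≠ φ j) :
    Surjective (MonoidHom.pi φ) := by
  revert φ
  refine Finite.induction_empty_option (P := fun ι => ∀ φ : ι → F →* G, (∀ i, Surjective (φ i)) →
    (Pairwise fun i j => ∀ α : MulAut G, α.toMonoidHom.comp (φ i) ≠ φ j) →
    Surjective (MonoidHom.pi φ)) ?_ ?_ ?_ ι
  · intro κ ι e ih φ hφ hpair u
    obtain ⟨w, hw⟩ := ih (φ ∘ e) (fun _ => hφ _) (hpair.comp_of_injective e.injective) (u ∘ e)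
    exact ⟨w, funext fun j => by simpa using congrFun hw (e.symm j)⟩
  · exact fun φ _ _ _ => ⟨1, funext nofun⟩
  · intro ι _ ih φ hφ hpair
    have hd := ih (φ ∘ some) (fun _ => hφ _) (hpair.comp_of_injective (Option.some_injective ι))
    rcases MonoidHom.surjective_prod_or_exists_comp_eq hd (hφ none) with hprod | ⟨ψ, hψ⟩
    · intro u
      obtain ⟨w, hw⟩ := hprod (u ∘ some, u none)
      simp only [MonoidHom.prod_apply, Prod.mk.injEq] at hw
      exact ⟨w, funext fun i => by cases i with
        | none => exact hw.2
        | some i => exact congrFun hw.1 i⟩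
    · have hψs : Surjective ψ := Surjective.of_comp (hψ ▸ hφ none :)
      obtain ⟨i, α, hα⟩ := IsSimpleGroup.exists_mulAut_comp_eval_eq hna ψ hψs
      refine absurd ?_ (hpair (Option.some_ne_none i) α)
      rw [← hψ, ← hα]
      rfl

theorem exists_forall_apply_eq_of_compatible (hna : ∃ a b : G, a * b ≠ b * a)
    {ι : Type*} [Finite ι] (φ : ι → F →* G) (hφ : ∀ i, Surjective (φ i)) (u : ι → G)
    (hu : ∀ i j, ∀ α : MulAut G, α.toMonoidHom.comp (φ i) = φ j → α (u i) = u j) :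
    ∃ w, ∀ i, φ i w = u i := by
  let s := (MulAction.orbitRel (MulAut G) (F →* G)).comap φ
  let r : Quotient s → ι := Quotient.out
  obtain ⟨w, hw⟩ := surjective_pi_of_pairwise_ne_mulAut_comp hna (φ ∘ r) (fun _ => hφ _)
    (fun q₁ q₂ hne α h => hne (by simpa [r] using (Quotient.sound (s := s) ⟨α, h⟩).symm)) (u ∘ r)
  refine ⟨w, fun i => ?_⟩
  obtain ⟨α, hα⟩ : ∃ α : MulAut G, α.toMonoidHom.comp (φ (r ⟦i⟧)) = φ i :=
    s.symm (Quotient.mk_out i)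
  rw [← hα, ← hu _ _ α hα]
  exact congrArg α (congrFun hw ⟦i⟧)

end Hall

/-- The image of the diagonal of all epimorphisms `F₂ → G` consists exactly of
the tuples compatible with the `Aut(G)`-action on epimorphisms. -/
theorem diagonal_image_eq_twisted_diagonal (G : Type*) [Group G] [Finite G]
    [IsSimpleGroup G] (hna : ∃ a b : G, a * b ≠ b * a) :
    Set.range (fun w : FreeGroup (Fin 2) =>
        fun φ : {f : FreeGroup (Fin 2) →* G // Function.Surjective f} => φ.val w)
      = {u : {f : FreeGroup (Fin 2) →* G // Function.Surjective f} → G |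
          ∀ i j : {f : FreeGroup (Fin 2) →* G // Function.Surjective f},
            ∀ α : MulAut G, α.toMonoidHom.comp i.val = j.val →
              α (u i) = u j} := by
  have : Finite (FreeGroup (Fin 2) →* G) := Finite.of_equiv _ FreeGroup.lift
  ext u
  constructor
  · rintro ⟨w, rfl⟩ i j α hα
    exact DFunLike.congr_fun hα w
  · intro hu
    obtain ⟨w, hw⟩ := exists_forall_apply_eq_of_compatible hna Subtype.val (fun φ => φ.2) u hu
    exact ⟨w, funext hw⟩
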